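/- arXiv:1004.2159 — 4 statements merged into one kernel-verified Lean document; each statement's English description precedes it below -/
import Mathlib

section
/- Let F be a field, n a natural number, and Q a set of polynomials in the commutative polynomial ring F[x_1,...,x_n]. Then Q has no common root a in F^n with every coordinate a_i in {0,1} if and only if the constant polynomial 1 belongs to the ideal of F[x_1,...,x_n] generated by Q together with the Boolean axioms x_i^2 - x_i for i = 1,...,n. -/
/-!
Soundness: at a `{0,1}`-point every Boolean axiom vanishes, so evaluation kills the whole ideal,
and it cannot kill `1`.

Completeness: if `1` is not in the ideal, it lies in a maximal ideal `M`. In the domain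
`F[x]/M` every `xᵢ` is an idempotent, hence `0` or `1`, so the quotient map is evaluation at a
`{0,1}`-point `a` followed by the embedding of `F`; since `Q ⊆ M`, `a` is a common root of `Q`.
-/

open MvPolynomial

section

variable {σ R : Type*}

theorem MvPolynomial.span_union_boolean_le_ker_eval [CommRing R] {Q : Set (MvPolynomial σ R)}
    {a : σ → R} (ha : ∀ i, a i = 0 ∨ a i = 1) (hQ : ∀ q ∈ Q, eval a q = 0) :
    Ideal.span (Q ∪ Set.range fun i => X i ^ 2 - X i) ≤ RingHom.ker (eval a) := by
  rw [Ideal.span_le]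
  rintro p (hp | ⟨i, rfl⟩)
  · exact hQ p hp
  · rcases ha i with h | h <;> simp [h]

theorem MvPolynomial.exists_zero_one_root_of_isPrime [Field R] (I : Ideal (MvPolynomial σ R))
    [I.IsPrime] (hI : ∀ i, X i ^ 2 - X i ∈ I) :
    ∃ a : σ → R, (∀ i, a i = 0 ∨ a i = 1) ∧ ∀ p ∈ I, eval a p = 0 := by
  let π := Ideal.Quotient.mkₐ R I
  have hidem : ∀ i, π (X i) = 0 ∨ π (X i) = 1 := fun i =>
    IsIdempotentElem.iff_eq_zero_or_one.mp <| by
      rw [IsIdempotentElem, ← map_mul, ← sub_eq_zero, ← map_sub, ← sq]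
      exact Ideal.Quotient.eq_zero_iff_mem.mpr (hI i)
  classical
  let a : σ → R := fun i => if π (X i) = 0 then 0 else 1
  have hπ : π = (Algebra.ofId R _).comp (aeval a) := by
    refine algHom_ext fun i => ?_
    rcases hidem i with h | h <;> simp [a, h]
  refine ⟨a, fun i => by by_cases h : π (X i) = 0 <;> simp [a, h], fun p hp => ?_⟩
  have hπp : π p = 0 := Ideal.Quotient.eq_zero_iff_mem.mpr hp
  rw [hπ, AlgHom.comp_apply, Algebra.ofId_apply,
    map_eq_zero_iff _ (algebraMap R _).injective] at hπp
  simpa using hπp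

end

/-- Soundness and completeness of polynomial calculus: a set `Q` of commutative
polynomials has no common `{0,1}`-root over the field `F` iff `1` lies in the ideal
generated by `Q` together with the Boolean axioms `x_i^2 - x_i`. -/
theorem pc_sound_complete (F : Type*) [Field F] (n : ℕ)
    (Q : Set (MvPolynomial (Fin n) F)) :
    (¬ ∃ a : Fin n → F, (∀ i, a i = 0 ∨ a i = 1) ∧ ∀ q ∈ Q, eval a q = 0) ↔
      (1 : MvPolynomial (Fin n) F) ∈
        Ideal.span (Q ∪ Set.range (fun i : Fin n => X i ^ 2 - X i)) := by
  constructor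
  · intro hno_root
    by_contra h1
    obtain ⟨M, hM, hle⟩ := Ideal.exists_le_maximal _ (Ideal.ne_top_iff_one _ |>.mpr h1)
    obtain ⟨a, ha, hroot⟩ := exists_zero_one_root_of_isPrime M
      fun i => hle (Ideal.subset_span (Or.inr ⟨i, rfl⟩))
    exact hno_root ⟨a, ha, fun q hq => hroot q (hle (Ideal.subset_span (Or.inl hq)))⟩
  · rintro h1 ⟨a, ha, hQ⟩
    simpa using span_union_boolean_le_ker_eval ha hQ h1
end

section
/- Let F be a field and let Q be a set of noncommutative polynomials in the free associative F-algebra on generators x_1,...,x_n. If there is no assignment e : {1,...,n} -> F with every e_i in {0,1} such that evaluating each q in Q at e (via the F-algebra homomorphism to F sending x_i to e_i) gives 0, then 1 belongs to the two-sided ideal of the free algebra generated by Q together with the Boolean axioms x_i*(1 - x_i) for all i and the commutator axioms x_i*x_j - x_j*x_i for all i != j. -/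
/-!
Let `I` be the ideal. It contains the commutators of the generators, hence all commutators, so
if `1 ∉ I` then the quotient by `I` is a nonzero commutative ring and maps onto a field `K`.
In `K` the image of each `xᵢ` is idempotent, hence `0` or `1`, so the map to `K` is evaluation
at a Boolean point `e` followed by the injective map `F → K`, and `e` is a common zero of `Q`.
-/

universe u

open FreeAlgebra

theorem FreeAlgebra.commute_of_commute_ι {R X B : Type*} [CommSemiring R] [Semiring B]
    (f : FreeAlgebra R X →+* B) (h : ∀ i j, Commute (f (ι R i)) (f (ι R j)))
    (x y : FreeAlgebra R X) : Commute (f x) (f y) := by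
  have hι : ∀ i y, Commute (f (ι R i)) (f y) := by
    intro i y
    induction y with
    | grade0 r => exact ((Algebra.commute_algebraMap_left r (ι R i)).map f).symm
    | grade1 j => exact h i j
    | mul a b ha hb => rw [map_mul]; exact ha.mul_right hb
    | add a b ha hb => rw [map_add]; exact ha.add_right hb
  induction x with
  | grade0 r => exact (Algebra.commute_algebraMap_left r y).map f
  | grade1 i => exact hι i y
  | mul a b ha hb => rw [map_mul]; exact ha.mul_left hb
  | add a b ha hb => rw [map_add]; exact ha.add_left hb

theorem TwoSidedIdeal.mul_sub_mul_mem_iff_commute {A : Type*} [Ring A] (I : TwoSidedIdeal A)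
    (a b : A) : a * b - b * a ∈ I ↔ Commute (I.ringCon.mk' a) (I.ringCon.mk' b) := by
  rw [Commute, SemiconjBy, ← map_mul, ← map_mul, RingCon.coe_mk', RingCon.eq, I.rel_iff]

theorem FreeAlgebra.mul_sub_mul_mem_of_ι {R X : Type*} [CommRing R]
    (I : TwoSidedIdeal (FreeAlgebra R X)) (h : ∀ i j, ι R i * ι R j - ι R j * ι R i ∈ I)
    (x y : FreeAlgebra R X) : x * y - y * x ∈ I := by
  simp only [I.mul_sub_mul_mem_iff_commute] at h ⊢
  exact commute_of_commute_ι _ h x y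

abbrev RingCon.quotientCommRing {A : Type*} [Ring A] (c : RingCon A)
    (h : ∀ a b : A, c (a * b) (b * a)) : CommRing c.Quotient where
  mul_comm := by
    rintro ⟨a⟩ ⟨b⟩
    exact c.eq.2 (h a b)

theorem TwoSidedIdeal.exists_ringHom_field {A : Type u} [Ring A] (I : TwoSidedIdeal A)
    (h1 : (1 : A) ∉ I) (hcomm : ∀ a b : A, a * b - b * a ∈ I) :
    ∃ (K : Type u) (_ : Field K) (f : A →+* K), ∀ a ∈ I, f a = 0 := by
  let _ := I.ringCon.quotientCommRing fun a b => (I.rel_iff _ _).2 (hcomm a b)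
  have : Nontrivial I.ringCon.Quotient :=
    nontrivial_of_ne (I.ringCon.mk' 1) (I.ringCon.mk' 0) fun h =>
      h1 ((I.mem_iff 1).2 (I.ringCon.eq.1 h))
  obtain ⟨m, hm⟩ := Ideal.exists_maximal I.ringCon.Quotient
  let _ := Ideal.Quotient.field m
  refine ⟨_, inferInstance, (Ideal.Quotient.mk m).comp I.ringCon.mk', fun a ha => ?_⟩
  have : I.ringCon.mk' a = 0 := I.ringCon.eq.2 ((I.mem_iff a).1 ha)
  rw [RingHom.comp_apply, this, map_zero]

theorem FreeAlgebra.exists_bool_point_of_ringHom {F X K : Type*} [Field F] [Ring K] [IsDomain K]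
    (f : FreeAlgebra F X →+* K) (hf : ∀ i, f (ι F i * (1 - ι F i)) = 0) :
    ∃ e : X → F, (∀ i, e i = 0 ∨ e i = 1) ∧ ∀ x, f x = 0 → lift F e x = 0 := by
  classical
  set σ := f.comp (algebraMap F (FreeAlgebra F X))
  have hι : ∀ i, f (ι F i) = 0 ∨ f (ι F i) = 1 := fun i =>
    IsIdempotentElem.iff_eq_zero_or_one.1 <| isIdempotentElem_iff_mul_one_sub_self.2 <| by
      simpa using hf i
  refine ⟨fun i => if f (ι F i) = 0 then 0 else 1, fun i => ite_eq_or_eq _ _ _, fun x hx => ?_⟩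
  have hfactor : ∀ x, f x = σ (lift F (fun i => if f (ι F i) = 0 then 0 else 1) x) := by
    intro x
    induction x with
    | grade0 r => simp [σ]
    | grade1 i => rcases hι i with h | h <;> simp [σ, h]
    | mul a b ha hb => rw [map_mul, map_mul, map_mul, ha, hb]
    | add a b ha hb => rw [map_add, map_add, map_add, ha, hb]
  exact σ.injective (by rw [← hfactor, hx, map_zero])

theorem FreeAlgebra.one_mem_of_not_exists_bool_point {F X : Type*} [Field F]
    (I : TwoSidedIdeal (FreeAlgebra F X)) (hbool : ∀ i, ι F i * (1 - ι F i) ∈ I)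
    (hcomm : ∀ i j, ι F i * ι F j - ι F j * ι F i ∈ I)
    (h : ¬ ∃ e : X → F, (∀ i, e i = 0 ∨ e i = 1) ∧ ∀ x ∈ I, lift F e x = 0) :
    1 ∈ I := by
  by_contra h1
  obtain ⟨K, _, f, hf⟩ := I.exists_ringHom_field h1 (mul_sub_mul_mem_of_ι I hcomm)
  obtain ⟨e, he, hker⟩ := exists_bool_point_of_ringHom f fun i => hf _ (hbool i)
  exact h ⟨e, he, fun x hx => hker x (hf x hx)⟩

/-- Completeness of NFPC: if a set `Q` of noncommutative polynomials has no common
`{0,1}`-root over the field `F` itself, then `1` lies in the two-sided ideal generated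
by `Q`, the Boolean axioms `x_i⬝(1 - x_i)` and the commutator axioms `x_i⬝x_j - x_j⬝x_i`. -/
theorem nfpc_complete (F : Type*) [Field F] (n : ℕ)
    (Q : Set (FreeAlgebra F (Fin n)))
    (h : ¬ ∃ e : Fin n → F, (∀ i, e i = 0 ∨ e i = 1) ∧
          ∀ q ∈ Q, FreeAlgebra.lift F e q = 0) :
    (1 : FreeAlgebra F (Fin n)) ∈
      TwoSidedIdeal.span
        (Q ∪ Set.range (fun i : Fin n =>
            FreeAlgebra.ι F i * (1 - FreeAlgebra.ι F i)) ∪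
          {p | ∃ i j : Fin n, i ≠ j ∧
            p = FreeAlgebra.ι F i * FreeAlgebra.ι F j
                - FreeAlgebra.ι F j * FreeAlgebra.ι F i}) := by
  refine FreeAlgebra.one_mem_of_not_exists_bool_point _
    (fun i => TwoSidedIdeal.subset_span (Or.inl (Or.inr ⟨i, rfl⟩))) (fun i j => ?_)
    fun ⟨e, he, hI⟩ =>
      h ⟨e, he, fun q hq => hI q (TwoSidedIdeal.subset_span (Or.inl (Or.inl hq)))⟩
  rcases eq_or_ne i j with rfl | hij
  · rw [sub_self]
    exact zero_mem _
  · exact TwoSidedIdeal.subset_span (Or.inr ⟨i, j, hij, rfl⟩)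
end

section
/- Let F be a field, d >= 1, and work in the free associative F-algebra on 2d generators y_1,...,y_d, z_1,...,z_d. Let HARD_d be the noncommutative polynomial that is the sum, over all subsets S of {1,...,d}, of the word formed by the product of the y_i for i in S in increasing order of i, followed by the product of the z_j for j in the complement of S in increasing order of j. Then for all subsets S, T of {1,...,d} with |S| = k and |T| = d - k, the coefficient in HARD_d of the word obtained by concatenating the increasing enumeration of {y_i : i in S} with the increasing enumeration of {z_j : j in T} equals 1 if T is the complement of S in {1,...,d}, and equals 0 otherwise. In particular, the C(d,k) x C(d,k) matrix whose rows are indexed by size-k subsets S, whose columns are indexed by size-(d-k) subsets T, and whose (S,T) entry is this coefficient, is a permutation matrix. -/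
/-! Under `FreeAlgebra F X ≃ₐ[F] F[FreeMonoid X]`, `HARD_d` becomes
`∑ S, single (ncWord S Sᶜ) 1`. A word `ncWord S T` determines `S` and `T` (its `y`-letters
and its `z`-letters), so only the summand indexed by `S` can contribute to its coefficient,
and it does exactly when `T = Sᶜ`.
Complementation is the bijection between `k`-subsets and `(d - k)`-subsets. -/

/-- The coefficient of a noncommutative polynomial (element of the free associative algebra)
at a word, via the identification with the monoid algebra of the free monoid. -/
noncomputable def ncCoeff {F : Type*} [CommSemiring F] {X : Type*}
    (x : FreeAlgebra F X) (w : FreeMonoid X) : F :=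
  (FreeAlgebra.equivMonoidAlgebraFreeMonoid x).coeff w

/-- The word consisting of the increasing enumeration of `{y_i : i ∈ S}` followed by the
increasing enumeration of `{z_j : j ∈ T}` (with `y` the left copy and `z` the right copy
of `Fin d`). -/
def ncWord {d : ℕ} (S T : Finset (Fin d)) : FreeMonoid (Fin d ⊕ Fin d) :=
  FreeMonoid.ofList (((S.sort (· ≤ ·)).map Sum.inl) ++ ((T.sort (· ≤ ·)).map Sum.inr))

/-- Nisan's hard polynomial `HARD_d`: the ordered representative of `∏ i, (y_i + z_i)`,
i.e. the sum over all subsets `S ⊆ {1,…,d}` of the product of the `y_i, i ∈ S` in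
increasing order followed by the product of the `z_j, j ∈ Sᶜ` in increasing order. -/
noncomputable def HARD (F : Type*) [Field F] (d : ℕ) : FreeAlgebra F (Fin d ⊕ Fin d) :=
  ∑ S : Finset (Fin d),
    ((S.sort (· ≤ ·)).map (fun i => FreeAlgebra.ι F (Sum.inl i : Fin d ⊕ Fin d))).prod *
      ((Sᶜ.sort (· ≤ ·)).map (fun j => FreeAlgebra.ι F (Sum.inr j : Fin d ⊕ Fin d))).prod

open FreeAlgebra in
theorem FreeAlgebra.equivMonoidAlgebraFreeMonoid_ι {R X : Type*} [CommSemiring R] (x : X) :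
    equivMonoidAlgebraFreeMonoid (ι R x) = MonoidAlgebra.single (FreeMonoid.of x) 1 := by
  simp only [equivMonoidAlgebraFreeMonoid, MonoidAlgebra.of_apply, AlgEquiv.ofAlgHom_apply,
    lift_ι_apply]

open FreeAlgebra in
theorem FreeAlgebra.equivMonoidAlgebraFreeMonoid_prod_map_ι {R X Y : Type*} [CommSemiring R]
    (f : Y → X) (l : List Y) :
    equivMonoidAlgebraFreeMonoid (l.map (fun y => ι R (f y))).prod =
      MonoidAlgebra.single (FreeMonoid.ofList (l.map f)) 1 := by
  induction l with
  | nil => simp [MonoidAlgebra.one_def]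
  | cons y l ih => simp [ih, equivMonoidAlgebraFreeMonoid_ι, MonoidAlgebra.single_mul_single]

section
variable {d : ℕ} {S T : Finset (Fin d)}

theorem inl_mem_ncWord_iff {i : Fin d} : Sum.inl i ∈ (ncWord S T).toList ↔ i ∈ S := by
  simp [ncWord]

theorem inr_mem_ncWord_iff {j : Fin d} : Sum.inr j ∈ (ncWord S T).toList ↔ j ∈ T := by
  simp [ncWord]

theorem ncWord_inj {S' T' : Finset (Fin d)} : ncWord S T = ncWord S' T' ↔ S = S' ∧ T = T' := by
  refine ⟨fun h => ⟨?_, ?_⟩, fun ⟨rfl, rfl⟩ => rfl⟩ <;> ext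
  · rw [← inl_mem_ncWord_iff, h, inl_mem_ncWord_iff]
  · rw [← inr_mem_ncWord_iff, h, inr_mem_ncWord_iff]

end

theorem equivMonoidAlgebraFreeMonoid_HARD (F : Type*) [Field F] (d : ℕ) :
    FreeAlgebra.equivMonoidAlgebraFreeMonoid (HARD F d) =
      ∑ S : Finset (Fin d), MonoidAlgebra.single (ncWord S Sᶜ) 1 := by
  simp only [HARD, map_sum, map_mul, FreeAlgebra.equivMonoidAlgebraFreeMonoid_prod_map_ι,
    MonoidAlgebra.single_mul_single, mul_one]
  rfl

theorem ncCoeff_HARD {F : Type*} [Field F] {d : ℕ} (S T : Finset (Fin d)) :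
    ncCoeff (HARD F d) (ncWord S T) = if T = Sᶜ then 1 else 0 := by
  classical
  rw [ncCoeff, equivMonoidAlgebraFreeMonoid_HARD, MonoidAlgebra.coeff_sum,
    Finsupp.finsetSum_apply, Finset.sum_eq_single_of_mem S (Finset.mem_univ S)]
  · simp [Finsupp.single_apply, ncWord_inj, eq_comm]
  · intro A _ hA
    simp [ncWord_inj, hA]

theorem Finset.card_compl_eq_card_sub_iff {α : Type*} [Fintype α] [DecidableEq α] {s : Finset α}
    {k : ℕ} (hk : k ≤ Fintype.card α) : sᶜ.card = Fintype.card α - k ↔ s.card = k := by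
  have := s.card_le_univ
  rw [card_compl]
  omega

theorem hard_coeff_eq_ite_general (F : Type*) [Field F] (d : ℕ)
    (k : ℕ) (hk : k ≤ d) :
    (∀ S T : Finset (Fin d), S.card = k → T.card = d - k →
        ncCoeff (HARD F d) (ncWord S T) = if T = Sᶜ then 1 else 0) ∧
      ∃ e : {S : Finset (Fin d) // S.card = k} ≃ {T : Finset (Fin d) // T.card = d - k},
        ∀ (S : {S : Finset (Fin d) // S.card = k})
          (T : {T : Finset (Fin d) // T.card = d - k}),
          ncCoeff (HARD F d) (ncWord S.1 T.1) = if T = e S then 1 else 0 := by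
  have hk_card : k ≤ Fintype.card (Fin d) := by rwa [Fintype.card_fin]
  refine ⟨fun S T _ _ => ncCoeff_HARD S T, ?_⟩
  refine ⟨compl_involutive.toPerm.subtypeEquiv fun S => ?_, fun S T => ?_⟩
  · simpa using (Finset.card_compl_eq_card_sub_iff hk_card).symm
  · simp [ncCoeff_HARD, Subtype.ext_iff]

/-- The coefficient of `HARD_d` at the word given by a size-`k` subset `S` (of `y`'s) followed
by a size-`(d-k)` subset `T` (of `z`'s) is `1` if `T = Sᶜ` and `0` otherwise; in particular the
corresponding `C(d,k) × C(d,k)` matrix of coefficients is a permutation matrix. -/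
theorem hard_coeff_eq_ite (F : Type*) [Field F] (d : ℕ) (hd : 1 ≤ d)
    (k : ℕ) (hk : k ≤ d) :
    (∀ S T : Finset (Fin d), S.card = k → T.card = d - k →
        ncCoeff (HARD F d) (ncWord S T) = if T = Sᶜ then 1 else 0) ∧
      ∃ e : {S : Finset (Fin d) // S.card = k} ≃ {T : Finset (Fin d) // T.card = d - k},
        ∀ (S : {S : Finset (Fin d) // S.card = k})
          (T : {T : Finset (Fin d) // T.card = d - k}),
          ncCoeff (HARD F d) (ncWord S.1 T.1) = if T = e S then 1 else 0 :=
  hard_coeff_eq_ite_general F d k hk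
end

section
/- Let F be a field, n >= 1 a natural number, and let a_0, a_1, ..., a_n be n+1 pairwise distinct elements of F. Then for every 0 <= k <= n there exist coefficients c_0, c_1, ..., c_n in F such that the elementary symmetric polynomial e_k(x_1,...,x_n) equals the sum over j = 0,...,n of c_j * prod_{i=1}^{n} (x_i + a_j), as polynomials in F[x_1,...,x_n]. -/
open MvPolynomial

/-!
By Vieta, `∏ i, (x_i + t) = ∑_m t^m e_{n-m}(x)`. Substituting `t = a_j` expresses the products
through the `e`'s by the Vandermonde matrix of `a`, which is invertible because the `a_j` are
distinct; the row of its inverse indexed by `n - k` gives the coefficients of `e_k`.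
-/

theorem Matrix.exists_sum_smul_sum_smul_eq_of_isUnit_det {R M ι : Type*} [CommRing R]
    [AddCommMonoid M] [Module R M] [Fintype ι] [DecidableEq ι] {A : Matrix ι ι R}
    (hA : IsUnit A.det) (v : ι → M) (k : ι) :
    ∃ c : ι → R, ∑ j, c j • ∑ m, A j m • v m = v k := by
  refine ⟨A⁻¹ k, ?_⟩
  calc ∑ j, A⁻¹ k j • ∑ m, A j m • v m
      = ∑ m, (A⁻¹ * A) k m • v m := by
        simp only [Finset.smul_sum, smul_smul, Matrix.mul_apply, Finset.sum_smul]
        exact Finset.sum_comm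
    _ = v k := by simp [Matrix.nonsing_inv_mul A hA, Matrix.one_apply]

theorem MvPolynomial.prod_X_add_C_eq_sum_pow_smul_esymm (σ : Type*) {R : Type*}
    [CommSemiring R] [Fintype σ] (t : R) :
    ∏ i : σ, (X i + C t) =
      ∑ m ∈ Finset.range (Fintype.card σ + 1), t ^ m • esymm σ R (Fintype.card σ - m) := by
  have vieta := congrArg (Polynomial.eval (C t)) (prod_C_add_X_eq_sum_esymm R σ)
  simp only [Polynomial.eval_prod, Polynomial.eval_finsetSum, Polynomial.eval_add,
    Polynomial.eval_mul, Polynomial.eval_pow, Polynomial.eval_X, Polynomial.eval_C] at vieta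
  rw [← Finset.sum_range_reflect]
  simp_rw [add_comm (X _), vieta, add_tsub_cancel_right]
  refine Finset.sum_congr rfl fun m hm => ?_
  rw [Nat.sub_sub_self (Finset.mem_range_succ_iff.mp hm), smul_eq_C_mul, map_pow, mul_comm]

theorem esymm_eq_linear_combination_of_products_general (F : Type*) [Field F] (n : ℕ)
    (a : Fin (n + 1) → F) (ha : Function.Injective a) (k : ℕ) (hk : k ≤ n) :
    ∃ c : Fin (n + 1) → F,
      esymm (Fin n) F k =
        ∑ j : Fin (n + 1), c j • ∏ i : Fin n, (X i + C (a j)) := by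
  have hV : IsUnit (Matrix.vandermonde a).det :=
    isUnit_iff_ne_zero.mpr (Matrix.det_vandermonde_ne_zero_iff.mpr ha)
  obtain ⟨c, hc⟩ := Matrix.exists_sum_smul_sum_smul_eq_of_isUnit_det hV
    (fun m : Fin (n + 1) => esymm (Fin n) F (n - m)) ⟨n - k, by omega⟩
  refine ⟨c, ?_⟩
  simp only [Matrix.vandermonde_apply, Nat.sub_sub_self hk] at hc
  simp only [prod_X_add_C_eq_sum_pow_smul_esymm, Fintype.card_fin, Finset.sum_range]
  exact hc.symm

/-- Polynomial interpolation for elementary symmetric polynomials: given `n + 1` pairwise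
distinct field elements `a_0, …, a_n`, every elementary symmetric polynomial
`e_k(x_1,…,x_n)` with `k ≤ n` is an `F`-linear combination of the `n + 1` products
`∏ i, (x_i + a_j)`. -/
theorem esymm_eq_linear_combination_of_products (F : Type*) [Field F] (n : ℕ) (hn : 1 ≤ n)
    (a : Fin (n + 1) → F) (ha : Function.Injective a) (k : ℕ) (hk : k ≤ n) :
    ∃ c : Fin (n + 1) → F,
      esymm (Fin n) F k =
        ∑ j : Fin (n + 1), c j • ∏ i : Fin n, (X i + C (a j)) :=
  esymm_eq_linear_combination_of_products_general F n a ha k hk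
end
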